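/- arXiv:2403.12213 — 7 statements merged into one kernel-verified Lean document; each statement's English description precedes it below -/
import Mathlib

section
/- Let Y be an n×n real matrix of the form Y₀ = Z₀ B₀ Z₀ᵀ with Z₀ ∈ ℝ^{n×k}, and let Yin be a symmetric n×n real matrix. For any Z ∈ ℝ^{n×k} and symmetric B ∈ ℝ^{k×k}, with f(Z; B, Y) := ⟨Z B Zᵀ, Y⟩ − (1/2)‖Z B Zᵀ‖_F², we have ‖Z B Zᵀ − Y₀‖_F² ≤ 8k·‖Yin − Y₀‖² + 4·(f(Z₀; B₀, Yin) − f(Z; B, Yin)), where ‖·‖ is the spectral norm. -/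
open Matrix

/-- Frobenius norm squared of a real matrix. -/
noncomputable def frobSq {n m : ℕ} (A : Matrix (Fin n) (Fin m) ℝ) : ℝ :=
  ∑ i, ∑ j, (A i j) ^ 2

/-- Trace inner product on square real matrices. -/
noncomputable def mip {n : ℕ} (A B : Matrix (Fin n) (Fin n) ℝ) : ℝ :=
  Matrix.trace (A * Bᵀ)

/-- Spectral norm (ℓ²→ℓ² operator norm) of a real square matrix. -/
noncomputable def specNorm {n : ℕ} (A : Matrix (Fin n) (Fin n) ℝ) : ℝ :=
  ‖Matrix.toEuclideanCLM (𝕜 := ℝ) A‖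

/-!
Write `U = Z B Zᵀ - Z₀ B₀ Z₀ᵀ` and `Ŷ = Yin - Z₀ B₀ Z₀ᵀ`. Expanding the squares gives
`f(Z; B, Yin) - f(Z₀; B₀, Yin) = ⟨U, Ŷ⟩ - ‖U‖_F² / 2`, so it suffices to show
`⟨U, Ŷ⟩ ≤ 2k ‖Ŷ‖² + ‖U‖_F² / 4`. The columns of `U` lie in its column space `K`, of
dimension `rank U ≤ 2k`, so `⟨U, Ŷ⟩ = ⟨U, P_K Ŷ⟩ ≤ ‖U‖_F ‖P_K Ŷ‖_F`, and for an orthonormal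
basis `(eᵢ)` of `K` we have `‖P_K Ŷ‖_F² = ∑ᵢ ‖Ŷᵀ eᵢ‖² ≤ rank U · ‖Ŷ‖²`. AM-GM finishes the proof.
-/

open Module
open scoped RealInnerProductSpace

section CompressedHilbertSchmidt

variable {E F ι : Type*} [NormedAddCommGroup E] [InnerProductSpace ℝ E]
  [NormedAddCommGroup F] [InnerProductSpace ℝ F] [Fintype ι]

lemma norm_sq_starProjection_eq_sum (K : Submodule ℝ E) [FiniteDimensional ℝ K] (x : E) :
    ‖K.starProjection x‖ ^ 2 = ∑ i, ⟪(stdOrthonormalBasis ℝ K i : E), x⟫ ^ 2 := by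
  rw [Submodule.starProjection_apply, Submodule.norm_coe,
    ← (stdOrthonormalBasis ℝ K).sum_sq_inner_right]
  simp

variable [CompleteSpace E] [CompleteSpace F]

lemma sum_norm_sq_starProjection_le (K : Submodule ℝ E) [FiniteDimensional ℝ K]
    (b : OrthonormalBasis ι ℝ F) (T : F →L[ℝ] E) :
    ∑ j, ‖K.starProjection (T (b j))‖ ^ 2 ≤ finrank ℝ K * ‖T‖ ^ 2 := by
  set e := stdOrthonormalBasis ℝ K
  calc ∑ j, ‖K.starProjection (T (b j))‖ ^ 2
      = ∑ i, ∑ j, ⟪T.adjoint (e i), b j⟫ ^ 2 := by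
        simp_rw [norm_sq_starProjection_eq_sum, ContinuousLinearMap.adjoint_inner_left]
        exact Finset.sum_comm
    _ = ∑ i, ‖T.adjoint (e i)‖ ^ 2 := by simp_rw [b.sum_sq_inner_left]
    _ ≤ ∑ _i, ‖T‖ ^ 2 := by
        gcongr with i
        calc ‖T.adjoint (e i)‖ ≤ ‖T.adjoint‖ * ‖(e i : E)‖ := T.adjoint.le_opNorm _
          _ = ‖T‖ := by
            rw [LinearIsometryEquiv.norm_map, ← Submodule.coe_norm, e.orthonormal.1 i, mul_one]
    _ = finrank ℝ K * ‖T‖ ^ 2 := by simp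

lemma sum_inner_le_sqrt_finrank_mul (K : Submodule ℝ E) [FiniteDimensional ℝ K]
    (b : OrthonormalBasis ι ℝ F) (T : F →L[ℝ] E) (u : ι → E) (hu : ∀ j, u j ∈ K) :
    ∑ j, ⟪u j, T (b j)⟫ ≤ √(finrank ℝ K) * ‖T‖ * √(∑ j, ‖u j‖ ^ 2) := by
  have hproj : ∀ j, ⟪u j, T (b j)⟫ = ⟪u j, K.starProjection (T (b j))⟫ := fun j => by
    rw [← K.inner_starProjection_left_eq_right, K.starProjection_eq_self_iff.mpr (hu j)]
  calc ∑ j, ⟪u j, T (b j)⟫ ≤ ∑ j, ‖K.starProjection (T (b j))‖ * ‖u j‖ := by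
        gcongr with j
        rw [hproj, mul_comm]
        exact real_inner_le_norm _ _
    _ ≤ √(∑ j, ‖K.starProjection (T (b j))‖ ^ 2) * √(∑ j, ‖u j‖ ^ 2) :=
        Real.sum_mul_le_sqrt_mul_sqrt _ _ _
    _ ≤ √(finrank ℝ K * ‖T‖ ^ 2) * √(∑ j, ‖u j‖ ^ 2) := by
        gcongr
        exact sum_norm_sq_starProjection_le K b T
    _ = √(finrank ℝ K) * ‖T‖ * √(∑ j, ‖u j‖ ^ 2) := by
        rw [Real.sqrt_mul (Nat.cast_nonneg _), Real.sqrt_sq (norm_nonneg _)]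

end CompressedHilbertSchmidt

lemma Matrix.rank_sub_le {m n R : Type*} [Fintype n] [Field R]
    (A B : Matrix m n R) : (A - B).rank ≤ A.rank + B.rank := by
  have hsub : (A - B).mulVecLin = A.mulVecLin + -B.mulVecLin := by
    ext; simp [sub_eq_add_neg]
  rw [Matrix.rank, Matrix.rank, Matrix.rank, hsub]
  calc finrank R (LinearMap.range (A.mulVecLin + -B.mulVecLin))
      ≤ finrank R ↥(LinearMap.range A.mulVecLin ⊔ LinearMap.range B.mulVecLin) := by
        apply Submodule.finrank_mono
        simpa only [LinearMap.range_neg] using LinearMap.range_add_le A.mulVecLin (-B.mulVecLin)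
    _ ≤ _ := Submodule.finrank_add_le_finrank_add_finrank _ _

section Matrix

variable {n : ℕ}

lemma frobSq_eq_mip (A : Matrix (Fin n) (Fin n) ℝ) : frobSq A = mip A A := by
  simp [frobSq, mip, Matrix.trace, Matrix.mul_apply, sq]

lemma mip_comm (A B : Matrix (Fin n) (Fin n) ℝ) : mip A B = mip B A := by
  rw [mip, mip, ← trace_transpose, transpose_mul, transpose_transpose]

lemma mip_sub_left (A B C : Matrix (Fin n) (Fin n) ℝ) : mip (A - B) C = mip A C - mip B C := by
  simp [mip, Matrix.sub_mul]

lemma mip_sub_right (A B C : Matrix (Fin n) (Fin n) ℝ) : mip A (B - C) = mip A B - mip A C := by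
  simp [mip, Matrix.mul_sub]

-- `mip P Y - 1 / 2 * frobSq P` is the objective `f` of the statement, with `P = Z B Zᵀ`.
lemma objective_sub_objective (P P₀ Y : Matrix (Fin n) (Fin n) ℝ) :
    (mip P Y - 1 / 2 * frobSq P) - (mip P₀ Y - 1 / 2 * frobSq P₀)
      = mip (P - P₀) (Y - P₀) - 1 / 2 * frobSq (P - P₀) := by
  simp only [frobSq_eq_mip, mip_sub_left, mip_sub_right, mip_comm P₀ P]
  ring

lemma rank_mul_mul_transpose_le {k : ℕ} (Z : Matrix (Fin n) (Fin k) ℝ)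
    (B : Matrix (Fin k) (Fin k) ℝ) :
    (Z * B * Zᵀ).rank ≤ k :=
  ((Z * B).rank_mul_le_left _).trans <| (Z.rank_mul_le_left _).trans Z.rank_le_width

lemma finrank_range_toEuclideanLin (U : Matrix (Fin n) (Fin n) ℝ) :
    finrank ℝ (LinearMap.range (toEuclideanLin U)) = U.rank := by
  rw [toEuclideanLin_eq_toLin_orthonormal, ← Matrix.rank_eq_finrank_range_toLin]

lemma mip_eq_sum_inner (U Y : Matrix (Fin n) (Fin n) ℝ) :
    mip U Y = ∑ j, ⟪toEuclideanCLM (𝕜 := ℝ) U (EuclideanSpace.basisFun (Fin n) ℝ j),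
      toEuclideanCLM (𝕜 := ℝ) Y (EuclideanSpace.basisFun (Fin n) ℝ j)⟫ := by
  simp only [mip, trace, diag_apply, Matrix.mul_apply, transpose_apply]
  rw [Finset.sum_comm]
  simp [PiLp.inner_apply, mul_comm]

lemma frobSq_eq_sum_norm_sq (U : Matrix (Fin n) (Fin n) ℝ) :
    frobSq U = ∑ j, ‖toEuclideanCLM (𝕜 := ℝ) U (EuclideanSpace.basisFun (Fin n) ℝ j)‖ ^ 2 := by
  rw [frobSq, Finset.sum_comm]
  simp [EuclideanSpace.norm_sq_eq]

lemma mip_le_sqrt_rank_mul_specNorm_mul_sqrt_frobSq (U Y : Matrix (Fin n) (Fin n) ℝ) :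
    mip U Y ≤ √U.rank * specNorm Y * √(frobSq U) := by
  rw [mip_eq_sum_inner, frobSq_eq_sum_norm_sq, specNorm, ← finrank_range_toEuclideanLin]
  exact sum_inner_le_sqrt_finrank_mul _ _ _ _ fun _ => ⟨_, rfl⟩

lemma mip_le_of_rank_le {r : ℕ} {U : Matrix (Fin n) (Fin n) ℝ} (hU : U.rank ≤ r)
    (Y : Matrix (Fin n) (Fin n) ℝ) :
    mip U Y ≤ r * specNorm Y ^ 2 + 1 / 4 * frobSq U := by
  have hrank : √U.rank ≤ √r := Real.sqrt_le_sqrt (by exact_mod_cast hU)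
  have hF : 0 ≤ frobSq U := by rw [frobSq]; positivity
  have hs : 0 ≤ specNorm Y := norm_nonneg _
  -- AM-GM: `√r s √F ≤ r s² + F / 4`
  calc mip U Y ≤ √U.rank * specNorm Y * √(frobSq U) :=
        mip_le_sqrt_rank_mul_specNorm_mul_sqrt_frobSq U Y
    _ ≤ √r * specNorm Y * √(frobSq U) := by gcongr
    _ ≤ r * specNorm Y ^ 2 + 1 / 4 * frobSq U := by
        nlinarith [sq_nonneg (√r * specNorm Y - √(frobSq U) / 2),
          Real.sq_sqrt (Nat.cast_nonneg (α := ℝ) r), Real.sq_sqrt hF]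

end Matrix

theorem sos_identifiability_I_general (n k : ℕ) (Z Z₀ : Matrix (Fin n) (Fin k) ℝ)
    (B B₀ : Matrix (Fin k) (Fin k) ℝ) (Yin : Matrix (Fin n) (Fin n) ℝ) :
    frobSq (Z * B * Zᵀ - Z₀ * B₀ * Z₀ᵀ)
      ≤ 8 * k * (specNorm (Yin - Z₀ * B₀ * Z₀ᵀ)) ^ 2
        + 4 * ((mip (Z₀ * B₀ * Z₀ᵀ) Yin - (1 / 2) * frobSq (Z₀ * B₀ * Z₀ᵀ))
              - (mip (Z * B * Zᵀ) Yin - (1 / 2) * frobSq (Z * B * Zᵀ))) := by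
  have hrank : (Z * B * Zᵀ - Z₀ * B₀ * Z₀ᵀ).rank ≤ 2 * k := by
    have := Matrix.rank_sub_le (Z * B * Zᵀ) (Z₀ * B₀ * Z₀ᵀ)
    linarith [rank_mul_mul_transpose_le Z B, rank_mul_mul_transpose_le Z₀ B₀]
  have hcross := mip_le_of_rank_le hrank (Yin - Z₀ * B₀ * Z₀ᵀ)
  have hgap := objective_sub_objective (Z * B * Zᵀ) (Z₀ * B₀ * Z₀ᵀ) Yin
  push_cast at hcross
  linarith

theorem sos_identifiability_I (n k : ℕ) (Z Z₀ : Matrix (Fin n) (Fin k) ℝ)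
    (B B₀ : Matrix (Fin k) (Fin k) ℝ) (Yin : Matrix (Fin n) (Fin n) ℝ)
    (hYin : Yinᵀ = Yin) (hB : Bᵀ = B) :
    frobSq (Z * B * Zᵀ - Z₀ * B₀ * Z₀ᵀ)
      ≤ 8 * k * (specNorm (Yin - Z₀ * B₀ * Z₀ᵀ)) ^ 2
        + 4 * ((mip (Z₀ * B₀ * Z₀ᵀ) Yin - (1 / 2) * frobSq (Z₀ * B₀ * Z₀ᵀ))
              - (mip (Z * B * Zᵀ) Yin - (1 / 2) * frobSq (Z * B * Zᵀ))) :=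
  sos_identifiability_I_general n k Z Z₀ B B₀ Yin
end

section
/- Let V, V₀ ∈ ℝ^{n×k} satisfy VᵀV = I_k and V₀ᵀV₀ = I_k, let M ∈ ℝ^{n×n} satisfy (I_n − VVᵀ) M (I_n − V₀V₀ᵀ) = 0, and let W ∈ ℝ^{n×n} be symmetric. Then ⟨M, W⟩ ≤ (3/2)‖M‖_F² + 2k·‖W‖². -/
open Matrix

/-!
With the orthogonal projections `P = V Vᵀ` and `Q = V₀ V₀ᵀ`, the hypothesis says
`M = P M + M Q - P M Q`, so `⟨M, W⟩ = ⟨M, P W⟩ + ⟨M, W Q⟩ - ⟨M, P W Q⟩`. Each term is at most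
`(‖M‖_F² + ‖X‖_F²) / 2`, and each `X` has `‖X‖_F² ≤ k ‖W‖²`: multiplying by a matrix scales the
Frobenius norm by at most its spectral norm, `‖P‖ ≤ 1`, and `‖P‖_F² = tr P = k`.
-/

open scoped Matrix.Norms.L2Operator

section Frobenius

variable {m n : ℕ}

lemma frobSq_nonneg (A : Matrix (Fin m) (Fin n) ℝ) : 0 ≤ frobSq A := by
  unfold frobSq
  positivity

lemma frobSq_transpose (A : Matrix (Fin m) (Fin n) ℝ) : frobSq Aᵀ = frobSq A := by
  unfold frobSq
  rw [Finset.sum_comm]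
  rfl

lemma frobSq_eq_trace_mul_transpose (A : Matrix (Fin m) (Fin n) ℝ) :
    frobSq A = trace (A * Aᵀ) := by
  simp [frobSq, trace, mul_apply, sq]

lemma frobSq_eq_sum_norm_sq_col (A : Matrix (Fin m) (Fin n) ℝ) :
    frobSq A = ∑ j, ‖(EuclideanSpace.equiv (Fin m) ℝ).symm (fun i => A i j)‖ ^ 2 := by
  rw [frobSq, Finset.sum_comm]
  simp [EuclideanSpace.norm_sq_eq]

lemma specNorm_eq_l2_opNorm (A : Matrix (Fin m) (Fin m) ℝ) : specNorm A = ‖A‖ := rfl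

lemma specNorm_transpose (A : Matrix (Fin m) (Fin m) ℝ) : specNorm Aᵀ = specNorm A := by
  simpa [specNorm_eq_l2_opNorm] using A.l2_opNorm_conjTranspose

lemma frobSq_mul_le_specNorm_sq_mul (A : Matrix (Fin m) (Fin m) ℝ) (B : Matrix (Fin m) (Fin n) ℝ) :
    frobSq (A * B) ≤ specNorm A ^ 2 * frobSq B := by
  rw [frobSq_eq_sum_norm_sq_col, frobSq_eq_sum_norm_sq_col, Finset.mul_sum]
  refine Finset.sum_le_sum fun j _ => ?_
  have hcol : (fun i => (A * B) i j) = A *ᵥ fun i => B i j := by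
    ext i
    simp [mul_apply, mulVec, dotProduct]
  have hAcol := A.l2_opNorm_mulVec ((EuclideanSpace.equiv (Fin m) ℝ).symm fun i => B i j)
  rw [hcol, specNorm_eq_l2_opNorm, ← mul_pow]
  exact pow_le_pow_left₀ (norm_nonneg _) hAcol 2

lemma frobSq_mul_le_mul_specNorm_sq (A : Matrix (Fin n) (Fin m) ℝ) (B : Matrix (Fin m) (Fin m) ℝ) :
    frobSq (A * B) ≤ frobSq A * specNorm B ^ 2 := by
  rw [← frobSq_transpose, transpose_mul, ← frobSq_transpose A, ← specNorm_transpose B, mul_comm]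
  exact frobSq_mul_le_specNorm_sq_mul _ _

lemma abs_mip_le (A B : Matrix (Fin n) (Fin n) ℝ) :
    |mip A B| ≤ (frobSq A + frobSq B) / 2 := by
  have hsum : mip A B = ∑ i, ∑ j, A i j * B i j := by
    simp [mip, trace, mul_apply]
  rw [hsum, abs_le]
  simp only [frobSq, ← Finset.sum_add_distrib, Finset.sum_div, ← Finset.sum_neg_distrib]
  constructor <;> refine Finset.sum_le_sum fun i _ => Finset.sum_le_sum fun j _ => ?_
  · nlinarith [sq_nonneg (A i j + B i j)]
  · nlinarith [sq_nonneg (A i j - B i j)]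

lemma mip_mul_mul (A M B W : Matrix (Fin n) (Fin n) ℝ) :
    mip (A * M * B) W = mip M (Aᵀ * W * Bᵀ) := by
  simp only [mip, transpose_mul, transpose_transpose, Matrix.mul_assoc]
  rw [trace_mul_comm, Matrix.mul_assoc, Matrix.mul_assoc]

lemma mip_eq_of_one_sub_mul_mul_one_sub_eq_zero {P Q M : Matrix (Fin n) (Fin n) ℝ}
    (hP : Pᵀ = P) (hQ : Qᵀ = Q) (hM : (1 - P) * M * (1 - Q) = 0) (W : Matrix (Fin n) (Fin n) ℝ) :
    mip M W = mip M (P * W) + mip M (W * Q) - mip M (P * W * Q) := by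
  have h := mip_mul_mul (1 - P) M (1 - Q) W
  rw [hM, transpose_sub, transpose_sub, transpose_one, hP, hQ] at h
  simp only [mip, transpose_mul, sub_mul, mul_sub, one_mul, mul_one, Matrix.zero_mul, trace_zero,
    transpose_sub, trace_sub, Matrix.mul_assoc] at h ⊢
  linarith

end Frobenius

section Projection

variable {n k : ℕ} {V : Matrix (Fin n) (Fin k) ℝ}

lemma transpose_mul_transpose_self : (V * Vᵀ)ᵀ = V * Vᵀ := by
  rw [transpose_mul, transpose_transpose]

lemma isStarProjection_mul_transpose (hV : Vᵀ * V = 1) : IsStarProjection (V * Vᵀ) where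
  isIdempotentElem := by
    rw [IsIdempotentElem, Matrix.mul_assoc, ← Matrix.mul_assoc Vᵀ, hV, Matrix.one_mul]
  isSelfAdjoint := by
    rw [IsSelfAdjoint, star_eq_conjTranspose, conjTranspose_eq_transpose_of_trivial,
      transpose_mul_transpose_self]

lemma specNorm_mul_transpose_le_one (hV : Vᵀ * V = 1) : specNorm (V * Vᵀ) ≤ 1 :=
  (isStarProjection_mul_transpose hV).norm_le

lemma frobSq_mul_transpose (hV : Vᵀ * V = 1) : frobSq (V * Vᵀ) = k := by
  rw [frobSq_eq_trace_mul_transpose, transpose_mul_transpose_self,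
    (isStarProjection_mul_transpose hV).isIdempotentElem.eq, trace_mul_comm, hV]
  simp

lemma frobSq_mul_transpose_mul_le (hV : Vᵀ * V = 1) {m : ℕ} (B : Matrix (Fin n) (Fin m) ℝ) :
    frobSq (V * Vᵀ * B) ≤ frobSq B :=
  (frobSq_mul_le_specNorm_sq_mul _ B).trans <| mul_le_of_le_one_left (frobSq_nonneg B) <|
    pow_le_one₀ (norm_nonneg _) (specNorm_mul_transpose_le_one hV)

end Projection

theorem sos_spectral_hoelder_II_general (n k : ℕ) (V V₀ : Matrix (Fin n) (Fin k) ℝ)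
    (M W : Matrix (Fin n) (Fin n) ℝ)
    (hV : Vᵀ * V = 1) (hV₀ : V₀ᵀ * V₀ = 1)
    (hM : (1 - V * Vᵀ) * M * (1 - V₀ * V₀ᵀ) = 0) :
    mip M W ≤ (3 / 2) * frobSq M + 2 * k * (specNorm W) ^ 2 := by
  have hPW : frobSq (V * Vᵀ * W) ≤ k * specNorm W ^ 2 := by
    simpa only [frobSq_mul_transpose hV] using frobSq_mul_le_mul_specNorm_sq (V * Vᵀ) W
  have hWQ : frobSq (W * (V₀ * V₀ᵀ)) ≤ k * specNorm W ^ 2 := by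
    simpa only [frobSq_mul_transpose hV₀, mul_comm] using
      frobSq_mul_le_specNorm_sq_mul W (V₀ * V₀ᵀ)
  have hPWQ : frobSq (V * Vᵀ * W * (V₀ * V₀ᵀ)) ≤ k * specNorm W ^ 2 := by
    rw [Matrix.mul_assoc]
    exact (frobSq_mul_transpose_mul_le hV _).trans hWQ
  rw [mip_eq_of_one_sub_mul_mul_one_sub_eq_zero transpose_mul_transpose_self
    transpose_mul_transpose_self hM]
  have hA := abs_le.mp (abs_mip_le M (V * Vᵀ * W))
  have hB := abs_le.mp (abs_mip_le M (W * (V₀ * V₀ᵀ)))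
  have hC := abs_le.mp (abs_mip_le M (V * Vᵀ * W * (V₀ * V₀ᵀ)))
  have hk : 0 ≤ (k : ℝ) * specNorm W ^ 2 := by positivity
  linarith [hA.2, hB.2, hC.1]

theorem sos_spectral_hoelder_II (n k : ℕ) (V V₀ : Matrix (Fin n) (Fin k) ℝ)
    (M W : Matrix (Fin n) (Fin n) ℝ)
    (hV : Vᵀ * V = 1) (hV₀ : V₀ᵀ * V₀ = 1)
    (hM : (1 - V * Vᵀ) * M * (1 - V₀ * V₀ᵀ) = 0) (hW : Wᵀ = W) :
    mip M W ≤ (3 / 2) * frobSq M + 2 * k * (specNorm W) ^ 2 :=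
  sos_spectral_hoelder_II_general n k V V₀ M W hV hV₀ hM
end

section
/- For two symmetric nonnegative k×k real matrices B₁, B₂, the squared graphon distance equals the doubly stochastic distance: δ₂(B₁, B₂)² = min over doubly stochastic k×k matrices S of (1/k²)·∑_{a,a',b,b' ∈ [k]} (B₁(a,b) − B₂(a',b'))²·S(a,a')·S(b,b'). -/
open MeasureTheory Matrix

/-- A map `φ : ℝ → Fin k` is measure preserving on `[0,1]` if each fiber
has Lebesgue measure `1/k`. -/
def MeasurePres {k : ℕ} (φ : ℝ → Fin k) : Prop :=
  Measurable φ ∧ ∀ i : Fin k,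
    volume (φ ⁻¹' {i} ∩ Set.Icc (0 : ℝ) 1) = ENNReal.ofReal (1 / k)

/-!
Two measure-preserving maps `φ₁, φ₂ : [0,1] → [k]` are one measurable map `(φ₁, φ₂)` into
`[k] × [k]`, and the graphon integral depends only on its joint law `P`: it equals
`∑ (B₁ a b - B₂ a' b')² P(a,a') P(b,b')`. The marginals of `P` are uniform exactly when `k • P` is
doubly stochastic, and conversely every probability measure on the finite set `[k] × [k]` is the
law of a measurable map on `[0,1]` (representation of laws on standard Borel spaces). Hence both
infima are taken over the same set of numbers.
-/

open Set

section FiniteValued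

variable {α ι κ : Type*} [MeasurableSpace α] [MeasurableSpace ι] [MeasurableSpace κ]
  [MeasurableSingletonClass ι] [MeasurableSingletonClass κ] {μ : Measure α} [IsFiniteMeasure μ]

theorem measure_eq_ofReal_iff_measureReal_eq {s : Set α} {r : ℝ} (hr : 0 ≤ r) :
    μ s = ENNReal.ofReal r ↔ μ.real s = r := by
  rw [← ofReal_measureReal, ENNReal.ofReal_eq_ofReal_iff measureReal_nonneg hr]

theorem integral_comp_eq_sum_of_fintype [Fintype ι] {ψ : α → ι} (hψ : Measurable ψ)
    (G : ι → ℝ) :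
    ∫ x, G (ψ x) ∂μ = ∑ p, μ.real (ψ ⁻¹' {p}) * G p := by
  rw [← integral_map hψ.aemeasurable (measurable_of_finite G).aestronglyMeasurable,
    integral_fintype .of_finite]
  simp [map_measureReal_apply hψ (measurableSet_singleton _)]

theorem integral_integral_comp_eq_sum_of_fintype [Fintype ι] {ψ : α → ι} (hψ : Measurable ψ)
    (F : ι → ι → ℝ) :
    ∫ x, ∫ y, F (ψ x) (ψ y) ∂μ ∂μ =
      ∑ p, ∑ q, μ.real (ψ ⁻¹' {p}) * μ.real (ψ ⁻¹' {q}) * F p q := by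
  simp_rw [integral_comp_eq_sum_of_fintype hψ,
    integral_comp_eq_sum_of_fintype hψ (fun p => ∑ q, μ.real (ψ ⁻¹' {q}) * F p q),
    Finset.mul_sum, mul_assoc]

theorem measureReal_preimage_eq_sum_prodMk_fst [Fintype κ] {f : α → ι} {g : α → κ} (hf : Measurable f)
    (hg : Measurable g) (a : ι) :
    μ.real (f ⁻¹' {a}) = ∑ b, μ.real ((fun x => (f x, g x)) ⁻¹' {(a, b)}) := by
  classical
  have hfib : f ⁻¹' {a} =
      (fun x => (f x, g x)) ⁻¹' (({a} ×ˢ Finset.univ : Finset (ι × κ)) : Set (ι × κ)) := by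
    ext x; simp [eq_comm]
  rw [hfib, ← sum_measureReal_preimage_singleton _
    (fun p _ => (hf.prodMk hg) (measurableSet_singleton p)), Finset.sum_product,
    Finset.sum_singleton]

theorem measureReal_preimage_eq_sum_prodMk_snd [Fintype ι] {f : α → ι} {g : α → κ} (hf : Measurable f)
    (hg : Measurable g) (b : κ) :
    μ.real (g ⁻¹' {b}) = ∑ a, μ.real ((fun x => (f x, g x)) ⁻¹' {(a, b)}) := by
  classical
  have hfib : g ⁻¹' {b} =
      (fun x => (f x, g x)) ⁻¹' ((Finset.univ ×ˢ {b} : Finset (ι × κ)) : Set (ι × κ)) := by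
    ext x; simp [eq_comm]
  rw [hfib, ← sum_measureReal_preimage_singleton _
    (fun p _ => (hf.prodMk hg) (measurableSet_singleton p)), Finset.sum_product]
  simp

end FiniteValued

theorem exists_measurable_map_restrict_unitInterval_eq {Y : Type*} [MeasurableSpace Y]
    [StandardBorelSpace Y] [Nonempty Y] (ν : Measure Y) [IsProbabilityMeasure ν] :
    ∃ ψ : ℝ → Y, Measurable ψ ∧ (volume.restrict (Icc (0 : ℝ) 1)).map ψ = ν := by
  obtain ⟨f, hf, hfν⟩ := ν.exists_measurable_map_eq
  have hproj : Measurable (projIcc (0 : ℝ) 1 zero_le_one) := continuous_projIcc.measurable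
  have hval : projIcc (0 : ℝ) 1 zero_le_one ∘ Subtype.val = id :=
    funext (projIcc_val zero_le_one)
  refine ⟨f ∘ projIcc 0 1 zero_le_one, hf.comp hproj, ?_⟩
  rw [← Measure.map_map hf hproj, ← unitInterval.measurePreserving_coe.map_eq,
    Measure.map_map hproj measurable_subtype_coe, hval, Measure.map_id, hfν]

section Coupling

variable {k : ℕ}

noncomputable def jointLaw (φ₁ φ₂ : ℝ → Fin k) : Matrix (Fin k) (Fin k) ℝ :=
  fun a a' => (volume.restrict (Icc (0 : ℝ) 1)).real ((fun x => (φ₁ x, φ₂ x)) ⁻¹' {(a, a')})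

def couplingCost {n : Type*} [Fintype n] (B₁ B₂ W : Matrix n n ℝ) : ℝ :=
  ∑ a, ∑ a', ∑ b, ∑ b', (B₁ a b - B₂ a' b') ^ 2 * W a a' * W b b'

theorem couplingCost_smul {n : Type*} [Fintype n] (B₁ B₂ W : Matrix n n ℝ) (c : ℝ) :
    couplingCost B₁ B₂ (c • W) = c ^ 2 * couplingCost B₁ B₂ W := by
  simp only [couplingCost, Matrix.smul_apply, smul_eq_mul, Finset.mul_sum]
  congr! 4 with a - a' - b - b'
  ring

theorem integral_sq_sub_eq_couplingCost (B₁ B₂ : Matrix (Fin k) (Fin k) ℝ) {φ₁ φ₂ : ℝ → Fin k}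
    (h₁ : Measurable φ₁) (h₂ : Measurable φ₂) :
    ∫ x in Icc (0 : ℝ) 1, ∫ y in Icc (0 : ℝ) 1, (B₁ (φ₁ x) (φ₁ y) - B₂ (φ₂ x) (φ₂ y)) ^ 2 =
      couplingCost B₁ B₂ (jointLaw φ₁ φ₂) := by
  refine (integral_integral_comp_eq_sum_of_fintype (h₁.prodMk h₂)
    (fun p q : Fin k × Fin k => (B₁ p.1 q.1 - B₂ p.2 q.2) ^ 2)).trans ?_
  simp only [couplingCost, jointLaw, Fintype.sum_prod_type]
  congr! 4 with a - a' - b - b'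
  ring

theorem measurePres_iff_sum_jointLaw_row {φ₁ φ₂ : ℝ → Fin k} (h₁ : Measurable φ₁)
    (h₂ : Measurable φ₂) : MeasurePres φ₁ ↔ ∀ a, ∑ a', jointLaw φ₁ φ₂ a a' = 1 / k := by
  refine (and_iff_right h₁).trans (forall_congr' fun a => ?_)
  rw [← Measure.restrict_apply' measurableSet_Icc,
    measure_eq_ofReal_iff_measureReal_eq (by positivity), measureReal_preimage_eq_sum_prodMk_fst h₁ h₂]
  rfl

theorem measurePres_iff_sum_jointLaw_col {φ₁ φ₂ : ℝ → Fin k} (h₁ : Measurable φ₁)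
    (h₂ : Measurable φ₂) : MeasurePres φ₂ ↔ ∀ a', ∑ a, jointLaw φ₁ φ₂ a a' = 1 / k := by
  refine (and_iff_right h₂).trans (forall_congr' fun a' => ?_)
  rw [← Measure.restrict_apply' measurableSet_Icc,
    measure_eq_ofReal_iff_measureReal_eq (by positivity), measureReal_preimage_eq_sum_prodMk_snd h₁ h₂]
  rfl

theorem exists_jointLaw_eq (W : Matrix (Fin k) (Fin k) ℝ) (hW0 : ∀ a a', 0 ≤ W a a')
    (hW1 : ∑ a, ∑ a', W a a' = 1) :
    ∃ φ₁ φ₂ : ℝ → Fin k, Measurable φ₁ ∧ Measurable φ₂ ∧ jointLaw φ₁ φ₂ = W := by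
  obtain ⟨a, -, -⟩ := Finset.exists_ne_zero_of_sum_ne_zero (hW1 ▸ one_ne_zero)
  have : Nonempty (Fin k) := ⟨a⟩
  have hsum : ∑ p : Fin k × Fin k, ENNReal.ofReal (W p.1 p.2) = 1 := by
    rw [← ENNReal.ofReal_sum_of_nonneg fun p _ => hW0 p.1 p.2, Fintype.sum_prod_type, hW1,
      ENNReal.ofReal_one]
  obtain ⟨ψ, hψ, hψW⟩ :=
    exists_measurable_map_restrict_unitInterval_eq (PMF.ofFintype _ hsum).toMeasure
  refine ⟨fun x => (ψ x).1, fun x => (ψ x).2, hψ.fst, hψ.snd, ?_⟩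
  ext a a'
  rw [jointLaw, ← map_measureReal_apply hψ (measurableSet_singleton _), hψW, measureReal_def,
    PMF.toMeasure_apply_singleton _ _ (measurableSet_singleton _), PMF.ofFintype_apply,
    ENNReal.toReal_ofReal (hW0 a a')]

theorem measurePres_and_iff_smul_jointLaw_mem_doublyStochastic (hk : k ≠ 0)
    {φ₁ φ₂ : ℝ → Fin k} (h₁ : Measurable φ₁) (h₂ : Measurable φ₂) :
    MeasurePres φ₁ ∧ MeasurePres φ₂ ↔ (k : ℝ) • jointLaw φ₁ φ₂ ∈ doublyStochastic ℝ (Fin k) := by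
  have hscale (x : ℝ) : x = 1 / k ↔ k * x = 1 := by
    rw [eq_div_iff (by exact_mod_cast hk), mul_comm]
  have hnonneg (a a' : Fin k) : 0 ≤ (k : ℝ) * jointLaw φ₁ φ₂ a a' :=
    mul_nonneg k.cast_nonneg measureReal_nonneg
  simp only [mem_doublyStochastic_iff_sum, measurePres_iff_sum_jointLaw_row h₁ h₂,
    measurePres_iff_sum_jointLaw_col h₁ h₂, Matrix.smul_apply, smul_eq_mul, ← Finset.mul_sum,
    hscale, hnonneg, implies_true, true_and]

end Coupling

theorem graphon_dist_eq_ds_dist_general (k : ℕ) (hk : 0 < k)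
    (B₁ B₂ : Matrix (Fin k) (Fin k) ℝ) :
    sInf {r : ℝ | ∃ φ₁ φ₂ : ℝ → Fin k, MeasurePres φ₁ ∧ MeasurePres φ₂ ∧
        r = ∫ x in Set.Icc (0 : ℝ) 1, ∫ y in Set.Icc (0 : ℝ) 1,
              (B₁ (φ₁ x) (φ₁ y) - B₂ (φ₂ x) (φ₂ y)) ^ 2}
    = sInf {r : ℝ | ∃ S : Matrix (Fin k) (Fin k) ℝ,
        (∀ a b, 0 ≤ S a b) ∧ (∀ a, ∑ b, S a b = 1) ∧ (∀ b, ∑ a, S a b = 1) ∧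
        r = (1 / (k : ℝ) ^ 2) *
              ∑ a, ∑ a', ∑ b, ∑ b', (B₁ a b - B₂ a' b') ^ 2 * S a a' * S b b'} := by
  have hk' : (k : ℝ) ≠ 0 := by positivity
  have hcost {φ₁ φ₂ : ℝ → Fin k} (h₁ : Measurable φ₁) (h₂ : Measurable φ₂) :
      ∫ x in Icc (0 : ℝ) 1, ∫ y in Icc (0 : ℝ) 1, (B₁ (φ₁ x) (φ₁ y) - B₂ (φ₂ x) (φ₂ y)) ^ 2 =
        1 / (k : ℝ) ^ 2 * couplingCost B₁ B₂ ((k : ℝ) • jointLaw φ₁ φ₂) := by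
    rw [integral_sq_sub_eq_couplingCost B₁ B₂ h₁ h₂, couplingCost_smul]
    field_simp
  congr 1
  ext r
  constructor
  · rintro ⟨φ₁, φ₂, hφ₁, hφ₂, rfl⟩
    obtain ⟨hS0, hSr, hSc⟩ := mem_doublyStochastic_iff_sum.1 <|
      (measurePres_and_iff_smul_jointLaw_mem_doublyStochastic hk.ne' hφ₁.1 hφ₂.1).1 ⟨hφ₁, hφ₂⟩
    exact ⟨_, hS0, hSr, hSc, hcost hφ₁.1 hφ₂.1⟩
  · rintro ⟨S, hS0, hSr, hSc, rfl⟩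
    obtain ⟨φ₁, φ₂, h₁, h₂, hW⟩ := exists_jointLaw_eq ((k : ℝ)⁻¹ • S)
      (fun a a' => mul_nonneg (inv_nonneg.2 k.cast_nonneg) (hS0 a a'))
      (by simp [← Finset.mul_sum, hSr, hk'])
    have hS : (k : ℝ) • jointLaw φ₁ φ₂ = S := by rw [hW, smul_inv_smul₀ hk']
    obtain ⟨hφ₁, hφ₂⟩ := (measurePres_and_iff_smul_jointLaw_mem_doublyStochastic hk.ne' h₁ h₂).2
      (hS ▸ mem_doublyStochastic_iff_sum.2 ⟨hS0, hSr, hSc⟩)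
    exact ⟨φ₁, φ₂, hφ₁, hφ₂, by rw [hcost h₁ h₂, hS, couplingCost]⟩

theorem graphon_dist_eq_ds_dist (k : ℕ) (hk : 0 < k)
    (B₁ B₂ : Matrix (Fin k) (Fin k) ℝ)
    (h₁s : B₁ᵀ = B₁) (h₂s : B₂ᵀ = B₂)
    (h₁0 : ∀ a b, 0 ≤ B₁ a b) (h₂0 : ∀ a b, 0 ≤ B₂ a b) :
    sInf {r : ℝ | ∃ φ₁ φ₂ : ℝ → Fin k, MeasurePres φ₁ ∧ MeasurePres φ₂ ∧
        r = ∫ x in Set.Icc (0 : ℝ) 1, ∫ y in Set.Icc (0 : ℝ) 1,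
              (B₁ (φ₁ x) (φ₁ y) - B₂ (φ₂ x) (φ₂ y)) ^ 2}
    = sInf {r : ℝ | ∃ S : Matrix (Fin k) (Fin k) ℝ,
        (∀ a b, 0 ≤ S a b) ∧ (∀ a, ∑ b, S a b = 1) ∧ (∀ b, ∑ a, S a b = 1) ∧
        r = (1 / (k : ℝ) ^ 2) *
              ∑ a, ∑ a', ∑ b, ∑ b', (B₁ a b - B₂ a' b') ^ 2 * S a a' * S b b'} :=
  graphon_dist_eq_ds_dist_general k hk B₁ B₂
end

section
/- Let B and B₀ be symmetric nonnegative k×k real matrices. Define δ_p(B, B₀) := (1/k²)·min over permutations π of [k] of ∑_{i,j ∈ [k]} (B(π(i), π(j)) − B₀(i,j))², and δ_ds(B, B₀) := min over doubly stochastic k×k matrices S of (1/k²)·∑_{a,a',b,b'} (B(a,b) − B₀(a',b'))²·S(a,a')·S(b,b'). Then δ_p(B, B₀) ≤ k⁴ · δ_ds(B, B₀). -/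
/-!
By Hall's theorem, a doubly stochastic `k × k` matrix `S` has a permutation `σ` with
`S a (σ a) ≥ 1 / k²` for every row `a`: if the rows in `s` have all their entries `≥ 1 / k²` in
the columns `T`, then `|s| = ∑_{a ∈ s} ∑_b S a b ≤ |T| + (total mass of the entries < 1 / k²)`,
and that mass is `< 1` since there are at most `k²` such entries.
Keeping only the terms `a' = σ a`, `b' = σ b` of the doubly stochastic cost, whose weights
`S a (σ a) * S b (σ b)` are at least `1 / k⁴`, shows that the permutation `σ⁻¹` costs at most
`k⁴` times as much.
-/

open Matrix Finset

section

variable {R n : Type*} [Fintype n] [Field R] [LinearOrder R] [IsStrictOrderedRing R]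

theorem Matrix.sum_filter_lt_inv_card_sq_lt_one (M : Matrix n n R) :
    ∑ p ∈ univ.filter (fun p : n × n ↦ M p.1 p.2 < ((Fintype.card n : R) ^ 2)⁻¹),
      M p.1 p.2 < 1 := by
  set F := univ.filter (fun p : n × n ↦ M p.1 p.2 < ((Fintype.card n : R) ^ 2)⁻¹)
  rcases F.eq_empty_or_nonempty with hF | hF
  · simp [hF]
  have : Nonempty n := ⟨hF.choose.1⟩
  calc ∑ p ∈ F, M p.1 p.2 < ∑ _p ∈ F, ((Fintype.card n : R) ^ 2)⁻¹ :=
        sum_lt_sum_of_nonempty hF fun p hp ↦ (mem_filter.1 hp).2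
    _ ≤ ∑ _p : n × n, ((Fintype.card n : R) ^ 2)⁻¹ :=
        sum_le_univ_sum_of_nonneg fun _ ↦ by positivity
    _ = 1 := by
      rw [sum_const, card_univ, Fintype.card_prod, nsmul_eq_mul]
      push_cast
      field_simp

theorem Matrix.exists_perm_inv_card_sq_le_of_mem_doublyStochastic [DecidableEq n]
    {M : Matrix n n R} (hM : M ∈ doublyStochastic R n) :
    ∃ σ : Equiv.Perm n, ∀ i, ((Fintype.card n : R) ^ 2)⁻¹ ≤ M i (σ i) := by
  set t : n → Finset n := fun i ↦ univ.filter fun j ↦ ((Fintype.card n : R) ^ 2)⁻¹ ≤ M i j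
  suffices hall : ∀ s : Finset n, #s ≤ #(s.biUnion t) by
    obtain ⟨f, hf, hft⟩ := (all_card_le_biUnion_card_iff_exists_injective t).1 hall
    exact ⟨Equiv.ofBijective f hf.bijective_of_finite, fun i ↦ (mem_filter.1 (hft i)).2⟩
  intro s
  set T := s.biUnion t
  have hT : ∑ i ∈ s, ∑ j ∈ T, M i j ≤ #T :=
    calc ∑ i ∈ s, ∑ j ∈ T, M i j ≤ ∑ i, ∑ j ∈ T, M i j :=
          sum_le_univ_sum_of_nonneg fun i ↦ sum_nonneg fun j _ ↦ nonneg_of_mem_doublyStochastic hM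
      _ = #T := by rw [sum_comm (f := fun i j ↦ M i j)]; simp [sum_col_of_mem_doublyStochastic hM]
  have hTc : ∑ i ∈ s, ∑ j ∈ Tᶜ, M i j < 1 := by
    refine lt_of_le_of_lt ?_ M.sum_filter_lt_inv_card_sq_lt_one
    rw [← sum_product' (f := fun i j ↦ M i j)]
    refine sum_le_sum_of_subset_of_nonneg (fun p hp ↦ ?_)
      fun _ _ _ ↦ nonneg_of_mem_doublyStochastic hM
    obtain ⟨hi, hj⟩ := mem_product.1 hp
    simp only [mem_filter, mem_univ, true_and, not_le.symm]
    exact fun h ↦ mem_compl.1 hj (mem_biUnion.2 ⟨p.1, hi, mem_filter.2 ⟨mem_univ _, h⟩⟩)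
  have : (#s : R) < #T + 1 :=
    calc (#s : R) = ∑ i ∈ s, ∑ j, M i j := by simp [sum_row_of_mem_doublyStochastic hM]
      _ = ∑ i ∈ s, ∑ j ∈ T, M i j + ∑ i ∈ s, ∑ j ∈ Tᶜ, M i j := by
        rw [← sum_add_distrib]; simp_rw [sum_add_sum_compl]
      _ < #T + 1 := add_lt_add_of_le_of_lt hT hTc
  exact Nat.lt_succ_iff.1 (by exact_mod_cast this)

theorem sum_sum_apply_le_sum_sum_sum_sum (g : n → n → n → n → R)
    (hg : ∀ a a' b b', 0 ≤ g a a' b b') (f : n → n) :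
    ∑ a, ∑ b, g a (f a) b (f b) ≤ ∑ a, ∑ a', ∑ b, ∑ b', g a a' b b' :=
  sum_le_sum fun a _ ↦
    (sum_le_sum fun b _ ↦ single_le_sum (fun b' _ ↦ hg a (f a) b b') (mem_univ (f b))).trans
      (single_le_sum (fun a' _ ↦ sum_nonneg fun b _ ↦ sum_nonneg fun b' _ ↦ hg a a' b b')
        (mem_univ (f a)))

theorem sum_sq_sub_perm_le_card_pow_four_mul (B B₀ S : Matrix n n R) (hS : ∀ a b, 0 ≤ S a b)
    (σ : Equiv.Perm n) (hσ : ∀ a, ((Fintype.card n : R) ^ 2)⁻¹ ≤ S a (σ a)) :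
    ∑ i, ∑ j, (B (σ.symm i) (σ.symm j) - B₀ i j) ^ 2 ≤
      (Fintype.card n : R) ^ 4 *
        ∑ a, ∑ a', ∑ b, ∑ b', (B a b - B₀ a' b') ^ 2 * S a a' * S b b' := by
  have termwise : ∀ a b, (B a b - B₀ (σ a) (σ b)) ^ 2 ≤
      (Fintype.card n : R) ^ 4 * ((B a b - B₀ (σ a) (σ b)) ^ 2 * S a (σ a) * S b (σ b)) := by
    intro a b
    have hk : (0 : R) < (Fintype.card n : R) ^ 2 := by
      have := Fintype.card_pos_iff.2 ⟨a⟩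
      positivity
    have ha := (inv_le_iff_one_le_mul₀' hk).1 (hσ a)
    have hb := (inv_le_iff_one_le_mul₀' hk).1 (hσ b)
    have hx := sq_nonneg (B a b - B₀ (σ a) (σ b))
    calc (B a b - B₀ (σ a) (σ b)) ^ 2 = (B a b - B₀ (σ a) (σ b)) ^ 2 * 1 * 1 := by ring
      _ ≤ (B a b - B₀ (σ a) (σ b)) ^ 2 * ((Fintype.card n : R) ^ 2 * S a (σ a)) *
          ((Fintype.card n : R) ^ 2 * S b (σ b)) := by gcongr
      _ = _ := by ring
  calc ∑ i, ∑ j, (B (σ.symm i) (σ.symm j) - B₀ i j) ^ 2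
      = ∑ a, ∑ b, (B a b - B₀ (σ a) (σ b)) ^ 2 :=
        Fintype.sum_equiv σ.symm _ _ fun i ↦ Fintype.sum_equiv σ.symm _ _ fun j ↦ by simp
    _ ≤ (Fintype.card n : R) ^ 4 *
          ∑ a, ∑ b, (B a b - B₀ (σ a) (σ b)) ^ 2 * S a (σ a) * S b (σ b) := by
        simp_rw [mul_sum]
        exact sum_le_sum fun a _ ↦ sum_le_sum fun b _ ↦ termwise a b
    _ ≤ _ := by
        refine mul_le_mul_of_nonneg_left (sum_sum_apply_le_sum_sum_sum_sum
          (fun a a' b b' ↦ (B a b - B₀ a' b') ^ 2 * S a a' * S b b') (fun a a' b b' ↦ ?_) σ)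
          (by positivity)
        have := hS a a'
        have := hS b b'
        positivity

end

theorem perm_dist_le_ds_dist_general (k : ℕ)
    (B B₀ : Matrix (Fin k) (Fin k) ℝ) :
    (1 / (k : ℝ) ^ 2) *
        sInf {r : ℝ | ∃ π : Equiv.Perm (Fin k),
          r = ∑ i, ∑ j, (B (π i) (π j) - B₀ i j) ^ 2}
      ≤ (k : ℝ) ^ 4 *
        sInf {r : ℝ | ∃ S : Matrix (Fin k) (Fin k) ℝ,
          (∀ a b, 0 ≤ S a b) ∧ (∀ a, ∑ b, S a b = 1) ∧ (∀ b, ∑ a, S a b = 1) ∧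
          r = (1 / (k : ℝ) ^ 2) *
                ∑ a, ∑ a', ∑ b, ∑ b', (B a b - B₀ a' b') ^ 2 * S a a' * S b b'} := by
  set P := {r : ℝ | ∃ π : Equiv.Perm (Fin k), r = ∑ i, ∑ j, (B (π i) (π j) - B₀ i j) ^ 2}
  set D := {r : ℝ | ∃ S : Matrix (Fin k) (Fin k) ℝ,
    (∀ a b, 0 ≤ S a b) ∧ (∀ a, ∑ b, S a b = 1) ∧ (∀ b, ∑ a, S a b = 1) ∧
    r = (1 / (k : ℝ) ^ 2) * ∑ a, ∑ a', ∑ b, ∑ b', (B a b - B₀ a' b') ^ 2 * S a a' * S b b'}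
  have hP : BddBelow P := ⟨0, by rintro _ ⟨π, rfl⟩; positivity⟩
  have hD : D.Nonempty :=
    ⟨_, 1, mem_doublyStochastic_iff_sum.1 (one_mem (doublyStochastic ℝ (Fin k))) |>.imp_right
      (·.imp_right (⟨·, rfl⟩))⟩
  rw [← smul_eq_mul ((k : ℝ) ^ 4), ← Real.sInf_smul_of_nonneg (by positivity)]
  refine le_csInf hD.smul_set ?_
  rintro _ ⟨_, ⟨S, h0, hrow, hcol, rfl⟩, rfl⟩
  obtain ⟨σ, hσ⟩ := exists_perm_inv_card_sq_le_of_mem_doublyStochastic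
    (mem_doublyStochastic_iff_sum.2 ⟨h0, hrow, hcol⟩)
  have hcost := sum_sq_sub_perm_le_card_pow_four_mul B B₀ S h0 σ hσ
  rw [Fintype.card_fin] at hcost
  calc 1 / (k : ℝ) ^ 2 * sInf P
      ≤ 1 / (k : ℝ) ^ 2 *
          ((k : ℝ) ^ 4 * ∑ a, ∑ a', ∑ b, ∑ b', (B a b - B₀ a' b') ^ 2 * S a a' * S b b') := by
        gcongr
        exact (csInf_le hP ⟨σ.symm, rfl⟩).trans hcost
    _ = _ := by simp only [smul_eq_mul]; ring

theorem perm_dist_le_ds_dist (k : ℕ) (hk : 0 < k)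
    (B B₀ : Matrix (Fin k) (Fin k) ℝ)
    (hBs : Bᵀ = B) (hB₀s : B₀ᵀ = B₀)
    (hB0 : ∀ a b, 0 ≤ B a b) (hB₀0 : ∀ a b, 0 ≤ B₀ a b) :
    (1 / (k : ℝ) ^ 2) *
        sInf {r : ℝ | ∃ π : Equiv.Perm (Fin k),
          r = ∑ i, ∑ j, (B (π i) (π j) - B₀ i j) ^ 2}
      ≤ (k : ℝ) ^ 4 *
        sInf {r : ℝ | ∃ S : Matrix (Fin k) (Fin k) ℝ,
          (∀ a b, 0 ≤ S a b) ∧ (∀ a, ∑ b, S a b = 1) ∧ (∀ b, ∑ a, S a b = 1) ∧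
          r = (1 / (k : ℝ) ^ 2) *
                ∑ a, ∑ a', ∑ b, ∑ b', (B a b - B₀ a' b') ^ 2 * S a a' * S b b'} :=
  perm_dist_le_ds_dist_general k B B₀
end

section
/- For all k×k real matrices A, B, define δ̂₂(A, B) := (1/k)·min over k×k permutation matrices P₁, P₂ of ‖P₁ A P₂ − B‖_F, and let δ₂(A, B) := min over measure-preserving maps φ₁, φ₂: [0,1] → [k] of ‖A^{φ₁} − B^{φ₂}‖₂ (L² norm on [0,1]²). Then δ̂₂(A, B) ≤ δ₂(A, B). -/
/-!
The joint law of `(φ₂, φ₁)` on `[0,1]` is a matrix `C` with `k • C` doubly stochastic, and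
`‖A^{φ₁} - B^{φ₂}‖₂² = ∑ C i i' * C j j' * (A i' j' - B i j)²`. This is a linear function of each
factor of `C ⊗ C` separately, and by Birkhoff–von Neumann a linear function on the doubly
stochastic matrices attains its minimum at a permutation matrix. Replacing the two factors one
after the other yields permutations `σ, τ` with `∑ (A (σ i) (τ j) - B i j)² ≤ k² ‖A^{φ₁} - B^{φ₂}‖₂²`.
-/

open Matrix MeasureTheory

/-- The permutation matrix of `σ`. -/
def permMat {k : ℕ} (σ : Equiv.Perm (Fin k)) : Matrix (Fin k) (Fin k) ℝ :=
  Matrix.of fun i j => if σ i = j then (1 : ℝ) else 0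

open Finset Set

section DoublyStochastic

variable {R n : Type*} [Field R] [LinearOrder R] [IsStrictOrderedRing R] [Fintype n]
  [DecidableEq n] {D : Matrix n n R}

theorem exists_perm_sum_le_of_mem_doublyStochastic (hD : D ∈ doublyStochastic R n)
    (g : n → n → R) : ∃ σ : Equiv.Perm n, ∑ i, g i (σ i) ≤ ∑ i, ∑ j, D i j * g i j := by
  let L : Matrix n n R →ₗ[R] R :=
    { toFun := fun M => ∑ i, ∑ j, M i j * g i j
      map_add' := fun M N => by simp only [Matrix.add_apply, add_mul, sum_add_distrib]
      map_smul' := fun c M => by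
        simp only [Matrix.smul_apply, smul_eq_mul, mul_sum, mul_assoc, RingHom.id_apply] }
  rw [← SetLike.mem_coe, doublyStochastic_eq_convexHull_permMatrix] at hD
  obtain ⟨_, ⟨σ, rfl⟩, hσ⟩ :=
    (L.concaveOn convex_univ).exists_le_of_mem_convexHull (subset_univ _) hD
  refine ⟨σ, le_of_eq_of_le ?_ hσ⟩
  simp [L]

theorem exists_perm_perm_sum_le_of_mem_doublyStochastic (hD : D ∈ doublyStochastic R n)
    (f : n → n → n → n → R) :
    ∃ σ τ : Equiv.Perm n, ∑ i, ∑ j, f i (σ i) j (τ j) ≤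
      ∑ i, ∑ i', D i i' * ∑ j, ∑ j', D j j' * f i i' j j' := by
  obtain ⟨σ, hσ⟩ := exists_perm_sum_le_of_mem_doublyStochastic hD
    fun i i' => ∑ j, ∑ j', D j j' * f i i' j j'
  obtain ⟨τ, hτ⟩ := exists_perm_sum_le_of_mem_doublyStochastic hD
    fun j j' => ∑ i, f i (σ i) j j'
  refine ⟨σ, τ, ?_⟩
  calc ∑ i, ∑ j, f i (σ i) j (τ j) = ∑ j, ∑ i, f i (σ i) j (τ j) := sum_comm
    _ ≤ ∑ j, ∑ j', D j j' * ∑ i, f i (σ i) j j' := hτ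
    _ = ∑ i, ∑ j, ∑ j', D j j' * f i (σ i) j j' := by
      simp only [mul_sum]
      exact (sum_congr rfl fun _ _ => sum_comm).trans sum_comm
    _ ≤ _ := hσ

end DoublyStochastic

theorem integral_comp_eq_sum_measureReal_preimage {α ι E : Type*} [MeasurableSpace α]
    [NormedAddCommGroup E] [NormedSpace ℝ E] [CompleteSpace E] (μ : Measure α)
    [IsFiniteMeasure μ] [Fintype ι] [MeasurableSpace ι] [MeasurableSingletonClass ι]
    {ψ : α → ι} (hψ : Measurable ψ) (h : ι → E) :
    ∫ x, h (ψ x) ∂μ = ∑ p, μ.real (ψ ⁻¹' {p}) • h p := by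
  rw [← integral_map hψ.aemeasurable .of_discrete, integral_fintype .of_finite]
  simp only [map_measureReal_apply hψ (measurableSet_singleton _)]

section Coupling

variable {α n : Type*} [MeasurableSpace α]

def couplingMatrix (μ : Measure α) (φ₁ φ₂ : α → n) : Matrix n n ℝ :=
  Matrix.of fun i j => μ.real (φ₁ ⁻¹' {i} ∩ φ₂ ⁻¹' {j})

variable {μ : Measure α} {φ₁ φ₂ : α → n}

theorem couplingMatrix_transpose : (couplingMatrix μ φ₁ φ₂)ᵀ = couplingMatrix μ φ₂ φ₁ := by
  ext i j
  simp [couplingMatrix, Set.inter_comm]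

variable [IsFiniteMeasure μ] [Fintype n] [MeasurableSpace n] [MeasurableSingletonClass n]

theorem sum_couplingMatrix_apply (hφ₂ : Measurable φ₂) (i : n) :
    ∑ j, couplingMatrix μ φ₁ φ₂ i j = μ.real (φ₁ ⁻¹' {i}) := by
  simp only [couplingMatrix, of_apply, Set.inter_comm (φ₁ ⁻¹' {i}),
    ← measureReal_restrict_apply (hφ₂ (measurableSet_singleton _))]
  rw [sum_measureReal_preimage_singleton _ fun j _ => hφ₂ (measurableSet_singleton j)]
  simp

theorem smul_couplingMatrix_mem_doublyStochastic [DecidableEq n] (hφ₁ : Measurable φ₁)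
    (hφ₂ : Measurable φ₂) {c : ℝ} (hc : 0 ≤ c) (h₁ : ∀ i, c * μ.real (φ₁ ⁻¹' {i}) = 1)
    (h₂ : ∀ j, c * μ.real (φ₂ ⁻¹' {j}) = 1) :
    c • couplingMatrix μ φ₁ φ₂ ∈ doublyStochastic ℝ n := by
  rw [mem_doublyStochastic_iff_sum]
  refine ⟨fun i j => mul_nonneg hc measureReal_nonneg, fun i => ?_, fun j => ?_⟩
  · simp only [Matrix.smul_apply, smul_eq_mul, ← mul_sum, sum_couplingMatrix_apply hφ₂, h₁]
  · simp only [Matrix.smul_apply, smul_eq_mul, ← mul_sum,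
      ← transpose_apply (couplingMatrix μ φ₁ φ₂), couplingMatrix_transpose,
      sum_couplingMatrix_apply hφ₁, h₂]

theorem integral_comp₂_eq_sum_couplingMatrix {E : Type*} [NormedAddCommGroup E]
    [NormedSpace ℝ E] [CompleteSpace E] (hφ₁ : Measurable φ₁) (hφ₂ : Measurable φ₂)
    (h : n → n → E) :
    ∫ x, h (φ₁ x) (φ₂ x) ∂μ = ∑ i, ∑ j, couplingMatrix μ φ₁ φ₂ i j • h i j := by
  rw [integral_comp_eq_sum_measureReal_preimage μ (hφ₁.prodMk hφ₂) fun p => h p.1 p.2,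
    Fintype.sum_prod_type]
  simp [couplingMatrix, ← Set.singleton_prod_singleton, Set.mk_preimage_prod]

theorem integral_integral_eq_sum_couplingMatrix (hφ₁ : Measurable φ₁) (hφ₂ : Measurable φ₂)
    (F : n → n → n → n → ℝ) :
    ∫ x, ∫ y, F (φ₁ x) (φ₂ x) (φ₁ y) (φ₂ y) ∂μ ∂μ =
      ∑ i, ∑ i', couplingMatrix μ φ₁ φ₂ i i' *
        ∑ j, ∑ j', couplingMatrix μ φ₁ φ₂ j j' * F i i' j j' := by
  simp only [integral_comp₂_eq_sum_couplingMatrix hφ₁ hφ₂ (F _ _), smul_eq_mul]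
  exact integral_comp₂_eq_sum_couplingMatrix hφ₁ hφ₂
    fun i i' => ∑ j, ∑ j', couplingMatrix μ φ₁ φ₂ j j' * F i i' j j'

end Coupling

theorem MeasurePres.natCast_mul_measureReal_preimage {k : ℕ} {φ : ℝ → Fin k}
    (hφ : MeasurePres φ) (i : Fin k) :
    (k : ℝ) * (volume.restrict (Icc (0 : ℝ) 1)).real (φ ⁻¹' {i}) = 1 := by
  have hk : (k : ℝ) ≠ 0 := Nat.cast_ne_zero.2 i.pos.ne'
  rw [measureReal_restrict_apply (hφ.1 (measurableSet_singleton i)), measureReal_def, hφ.2 i,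
    ENNReal.toReal_ofReal (by positivity)]
  field_simp

theorem permMat_eq_permMatrix {k : ℕ} (σ : Equiv.Perm (Fin k)) :
    permMat σ = σ.permMatrix ℝ := by
  ext i j
  simp [permMat]

theorem permMat_mul_mul_permMat {k : ℕ} (σ τ : Equiv.Perm (Fin k))
    (A : Matrix (Fin k) (Fin k) ℝ) : permMat σ * A * permMat τ = A.submatrix σ τ.symm := by
  simp only [permMat_eq_permMatrix, PEquiv.toMatrix_toPEquiv_mul, PEquiv.mul_toMatrix_toPEquiv,
    submatrix_submatrix]
  rfl

section IntervalIndex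

variable (k : ℕ) (hk : 0 < k)

noncomputable def intervalIndex : ℝ → Fin k := fun x =>
  ⟨min ⌊x * k⌋₊ (k - 1), (min_le_right _ _).trans_lt (Nat.sub_lt hk one_pos)⟩

theorem measurable_intervalIndex : Measurable (intervalIndex k hk) :=
  (measurable_from_nat (f := fun m : ℕ =>
    (⟨min m (k - 1), (min_le_right _ _).trans_lt (Nat.sub_lt hk one_pos)⟩ : Fin k))).comp
    (Nat.measurable_floor.comp (measurable_id.mul_const _))

theorem intervalIndex_preimage_inter_Ico (i : Fin k) :
    intervalIndex k hk ⁻¹' {i} ∩ Ico 0 1 = Ico ((i : ℝ) / k) ((i + 1) / k) := by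
  have hkR : (0 : ℝ) < k := Nat.cast_pos.2 hk
  ext x
  simp only [Set.mem_inter_iff, Set.mem_preimage, Set.mem_singleton_iff, Set.mem_Ico,
    intervalIndex, Fin.ext_iff, div_le_iff₀ hkR, lt_div_iff₀ hkR]
  constructor
  · rintro ⟨hi, hx0, hx1⟩
    have hlt : ⌊x * k⌋₊ < k := (Nat.floor_lt (by positivity)).2 (by nlinarith)
    exact (Nat.floor_eq_iff (by positivity)).1 (by omega)
  · rintro ⟨hix, hxi⟩
    have hx0 : 0 ≤ x := by nlinarith [(Nat.cast_nonneg i : (0 : ℝ) ≤ i)]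
    have hi : (i : ℝ) + 1 ≤ k := by exact_mod_cast i.isLt
    have hfl : ⌊x * k⌋₊ = i := (Nat.floor_eq_iff (by positivity)).2 ⟨hix, hxi⟩
    exact ⟨by omega, hx0, by nlinarith⟩

theorem measurePres_intervalIndex : MeasurePres (intervalIndex k hk) := by
  refine ⟨measurable_intervalIndex k hk, fun i => ?_⟩
  rw [← measure_congr ((ae_eq_refl _).inter Ico_ae_eq_Icc),
    intervalIndex_preimage_inter_Ico, Real.volume_Ico]
  congr 1
  field_simp
  ring

end IntervalIndex

theorem comb_dist_le_graphon_dist (k : ℕ) (hk : 0 < k)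
    (A B : Matrix (Fin k) (Fin k) ℝ) :
    (1 / (k : ℝ)) *
        sInf {r : ℝ | ∃ σ₁ σ₂ : Equiv.Perm (Fin k),
          r = Real.sqrt (∑ i, ∑ j, ((permMat σ₁ * A * permMat σ₂) i j - B i j) ^ 2)}
      ≤ sInf {r : ℝ | ∃ φ₁ φ₂ : ℝ → Fin k, MeasurePres φ₁ ∧ MeasurePres φ₂ ∧
          r = Real.sqrt (∫ x in Set.Icc (0 : ℝ) 1, ∫ y in Set.Icc (0 : ℝ) 1,
                (A (φ₁ x) (φ₁ y) - B (φ₂ x) (φ₂ y)) ^ 2)} := by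
  refine le_csInf
    ⟨_, _, _, measurePres_intervalIndex k hk, measurePres_intervalIndex k hk, rfl⟩ ?_
  rintro _ ⟨φ₁, φ₂, hφ₁, hφ₂, rfl⟩
  set μ := volume.restrict (Icc (0 : ℝ) 1)
  obtain ⟨σ, τ, hστ⟩ := exists_perm_perm_sum_le_of_mem_doublyStochastic
    (smul_couplingMatrix_mem_doublyStochastic (μ := μ) hφ₂.1 hφ₁.1 (Nat.cast_nonneg k)
      hφ₂.natCast_mul_measureReal_preimage hφ₁.natCast_mul_measureReal_preimage)
    fun i i' j j' => (A i' j' - B i j) ^ 2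
  have hI := integral_integral_eq_sum_couplingMatrix (μ := μ) hφ₂.1 hφ₁.1
    fun i i' j j' => (A i' j' - B i j) ^ 2
  have hkR : (0 : ℝ) < k := Nat.cast_pos.2 hk
  calc (1 / (k : ℝ)) * sInf _
      ≤ 1 / k * √(∑ i, ∑ j, (A (σ i) (τ j) - B i j) ^ 2) := by
        gcongr
        refine csInf_le ⟨0, ?_⟩ ⟨σ, τ⁻¹, ?_⟩
        · rintro _ ⟨_, _, rfl⟩
          positivity
        · simp [permMat_mul_mul_permMat, Equiv.Perm.inv_def]
    _ ≤ 1 / k * √(k ^ 2 * ∫ x, ∫ y, (A (φ₁ x) (φ₁ y) - B (φ₂ x) (φ₂ y)) ^ 2 ∂μ ∂μ) := by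
        rw [hI]
        gcongr
        refine hστ.trans_eq ?_
        simp only [Matrix.smul_apply, smul_eq_mul, mul_sum]
        ring_nf
    _ = _ := by
        rw [Real.sqrt_mul (by positivity), Real.sqrt_sq hkR.le]
        field_simp
end

section
/- Let M be an n×n random symmetric 0/1 matrix with zero diagonal whose above-diagonal entries are independent, with Pr[M(i,j) = 1] = p_{ij} ≤ α/n for all i < j, where α ≥ 1. Let S ⊆ [n] be the (random) set of rows with more than 20α ones. Then the expected total number of ones in rows indexed by S is at most exp(−2α)·n·α. -/
/-!
If a row sum `x` exceeds `20 α` then `x ≤ exp (x / 2) ≤ exp (x - 10 α)`, so the heavy part of each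
row is at most `exp (-10 α) * exp x`. A row sum is a sum of at most `n` independent indicators of
probability at most `α / n`, hence `E[exp x] ≤ exp ((e - 1) α)`, and `(e - 1) α - 10 α ≤ -2 α`.
-/

open MeasureTheory

/-- Entry `(i,j)` of the symmetric 0/1 matrix with zero diagonal encoded by the
above-diagonal indicator `ω`. -/
def symEntry {n : ℕ} (ω : {p : Fin n × Fin n // p.1 < p.2} → Bool) (i j : Fin n) : ℝ :=
  if h : i < j then (if ω ⟨(i, j), h⟩ then 1 else 0)
  else if h' : j < i then (if ω ⟨(j, i), h'⟩ then 1 else 0) else 0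

theorem Real.le_exp_half (x : ℝ) : x ≤ Real.exp (x / 2) := by
  rcases lt_or_ge x 0 with hx | hx
  · linarith [Real.exp_pos (x / 2)]
  · nlinarith [Real.quadratic_le_exp_of_nonneg (by linarith : 0 ≤ x / 2)]

theorem ite_lt_self_le_exp_sub (t x : ℝ) : (if t < x then x else 0) ≤ Real.exp (x - t / 2) := by
  split_ifs with h
  · exact (Real.le_exp_half x).trans (Real.exp_le_exp.mpr (by linarith))
  · exact (Real.exp_pos _).le

theorem Fintype.sum_subtype_lt {α M : Type*} [Fintype α] [LT α] [DecidableLT α] [AddCommMonoid M]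
    (g : {q : α × α // q.1 < q.2} → M) :
    ∑ q, g q = ∑ a, ∑ b, if h : a < b then g ⟨(a, b), h⟩ else 0 := by
  rw [← Fintype.sum_prod_type', Finset.sum_dite, Finset.sum_const_zero, add_zero]
  exact Fintype.sum_equiv (Equiv.subtypeEquivRight (by simp)) _ _ fun _ => rfl

section Bernoulli

variable {ι : Type*} [Fintype ι]

noncomputable def bernoulliPi (p : ι → ℝ) (hp1 : ∀ q, p q ≤ 1) : Measure (ι → Bool) :=
  Measure.pi fun q => (PMF.bernoulli (p q).toNNReal (Real.toNNReal_le_one.mpr (hp1 q))).toMeasure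

instance (p : ι → ℝ) (hp1 : ∀ q, p q ≤ 1) : IsProbabilityMeasure (bernoulliPi p hp1) := by
  unfold bernoulliPi; infer_instance

theorem PMF.integral_bernoulli_toNNReal {p : ℝ} (hp0 : 0 ≤ p) (hp1 : p.toNNReal ≤ 1)
    (f : Bool → ℝ) :
    ∫ b, f b ∂(PMF.bernoulli p.toNNReal hp1).toMeasure = p * f true + (1 - p) * f false := by
  rw [PMF.integral_eq_sum, Fintype.sum_bool]
  simp [PMF.bernoulli_apply, ENNReal.toReal_sub_of_le (ENNReal.coe_le_one_iff.mpr hp1),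
    Real.coe_toNNReal _ hp0]

theorem integral_exp_sum_bernoulliPi_le (p : ι → ℝ) (hp0 : ∀ q, 0 ≤ p q) (hp1 : ∀ q, p q ≤ 1)
    (c : ι → ℝ) :
    ∫ ω, Real.exp (∑ q, c q * (if ω q then 1 else 0)) ∂bernoulliPi p hp1
      ≤ Real.exp (∑ q, p q * (Real.exp (c q) - 1)) := by
  have hfactor : ∀ q, ∫ b, Real.exp (c q * (if b then 1 else 0))
      ∂(PMF.bernoulli (p q).toNNReal (Real.toNNReal_le_one.mpr (hp1 q))).toMeasure
        = 1 + p q * (Real.exp (c q) - 1) := fun q => by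
    rw [PMF.integral_bernoulli_toNNReal (hp0 q)]
    simp only [if_true, Bool.false_eq_true, if_false, mul_one, mul_zero, Real.exp_zero]
    ring
  calc ∫ ω, Real.exp (∑ q, c q * (if ω q then 1 else 0)) ∂bernoulliPi p hp1
      = ∏ q, (1 + p q * (Real.exp (c q) - 1)) := by
        simp_rw [Real.exp_sum, ← hfactor]
        exact integral_fintype_prod_eq_prod fun q (b : Bool) =>
          Real.exp (c q * (if b then 1 else 0))
    _ ≤ ∏ q, Real.exp (p q * (Real.exp (c q) - 1)) := by
        refine Finset.prod_le_prod (fun q _ => ?_) fun q _ => ?_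
        · nlinarith [hp0 q, hp1 q, Real.exp_pos (c q)]
        · linarith [Real.add_one_le_exp (p q * (Real.exp (c q) - 1))]
    _ = Real.exp (∑ q, p q * (Real.exp (c q) - 1)) := (Real.exp_sum _ _).symm

end Bernoulli

section Rows

variable {n : ℕ}

def incidence (i : Fin n) (q : {q : Fin n × Fin n // q.1 < q.2}) : ℝ :=
  if q.1.1 = i ∨ q.1.2 = i then 1 else 0

theorem sum_symEntry (ω : {q : Fin n × Fin n // q.1 < q.2} → Bool) (i : Fin n) :
    ∑ j, symEntry ω i j = ∑ q, incidence i q * (if ω q then 1 else 0) := by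
  -- `X` is the upper triangle of the matrix; a pair is incident to `i` through exactly one end.
  set X : Fin n → Fin n → ℝ :=
    fun a b => if h : a < b then (if ω ⟨(a, b), h⟩ then 1 else 0) else 0
  have hsym : ∀ j, symEntry ω i j = X i j + X j i := fun j => by
    rcases lt_trichotomy i j with h | rfl | h
    · simp [symEntry, X, h, h.not_gt]
    · simp [symEntry, X]
    · simp [symEntry, X, h, h.not_gt]
  have hinc : ∀ a b, (if h : a < b then
      incidence i ⟨(a, b), h⟩ * (if ω ⟨(a, b), h⟩ then 1 else 0) else 0)
        = (if a = i then X a b else 0) + (if b = i then X a b else 0) := fun a b => by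
    by_cases h : a < b
    · by_cases ha : a = i
      · subst ha; simp [incidence, X, h, h.ne']
      · by_cases hb : b = i <;> simp [incidence, X, h, ha, hb]
    · simp [X, h]
  simp only [hsym, Fintype.sum_subtype_lt, hinc, Finset.sum_add_distrib]
  rw [Finset.sum_comm (f := fun a b => if a = i then X a b else 0)]
  simp only [Finset.sum_ite_eq', Finset.mem_univ, if_true]

theorem symEntry_le_one (ω : {q : Fin n × Fin n // q.1 < q.2} → Bool) (i j : Fin n) :
    symEntry ω i j ≤ 1 := by
  unfold symEntry; split_ifs <;> norm_num

theorem sum_incidence_le (i : Fin n) : ∑ q, incidence i q ≤ n := by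
  calc ∑ q, incidence i q = ∑ j, symEntry (fun _ => true) i j := by simp [sum_symEntry]
    _ ≤ ∑ _j : Fin n, 1 := Finset.sum_le_sum fun j _ => symEntry_le_one _ i j
    _ = n := by simp

theorem sum_mul_incidence_le {α : ℝ} (hα : 0 ≤ α) (p : {q : Fin n × Fin n // q.1 < q.2} → ℝ)
    (hpα : ∀ q, p q ≤ α / n) (i : Fin n) : ∑ q, p q * incidence i q ≤ α := by
  have hinc : ∀ q, 0 ≤ incidence i q := fun q => by unfold incidence; split_ifs <;> norm_num
  calc ∑ q, p q * incidence i q ≤ ∑ q, α / n * incidence i q :=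
        Finset.sum_le_sum fun q _ => mul_le_mul_of_nonneg_right (hpα q) (hinc q)
    _ = α / n * ∑ q, incidence i q := (Finset.mul_sum _ _ _).symm
    _ ≤ α / n * n := mul_le_mul_of_nonneg_left (sum_incidence_le i) (by positivity)
    _ ≤ α := by
        rcases n.eq_zero_or_pos with rfl | hn
        · simpa using hα
        · rw [div_mul_cancel₀ _ (by positivity)]

theorem exp_incidence_sub_one (i : Fin n) (q : {q : Fin n × Fin n // q.1 < q.2}) :
    Real.exp (incidence i q) - 1 = (Real.exp 1 - 1) * incidence i q := by
  unfold incidence; split_ifs <;> simp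

theorem integral_exp_sum_symEntry_le {α : ℝ} (hα : 0 ≤ α)
    (p : {q : Fin n × Fin n // q.1 < q.2} → ℝ)
    (hp0 : ∀ q, 0 ≤ p q) (hp1 : ∀ q, p q ≤ 1) (hpα : ∀ q, p q ≤ α / n) (i : Fin n) :
    ∫ ω, Real.exp (∑ j, symEntry ω i j) ∂bernoulliPi p hp1 ≤ Real.exp ((Real.exp 1 - 1) * α) := by
  simp_rw [sum_symEntry]
  refine (integral_exp_sum_bernoulliPi_le p hp0 hp1 _).trans (Real.exp_le_exp.mpr ?_)
  simp_rw [exp_incidence_sub_one, mul_left_comm (p _), ← Finset.mul_sum]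
  exact mul_le_mul_of_nonneg_left (sum_mul_incidence_le hα p hpα i)
    (by linarith [Real.add_one_le_exp 1])

end Rows

theorem heavy_rows_expected_ones_general (n : ℕ) (α : ℝ) (hα : 1 ≤ α)
    (p : {q : Fin n × Fin n // q.1 < q.2} → ℝ)
    (hp0 : ∀ q, 0 ≤ p q) (hp1 : ∀ q, p q ≤ 1) (hpα : ∀ q, p q ≤ α / n) :
    (∫ ω, (∑ i, if 20 * α < ∑ j, symEntry ω i j then ∑ j, symEntry ω i j else 0)
        ∂ Measure.pi (fun q => (PMF.bernoulli (Real.toNNReal (p q))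
            (Real.toNNReal_le_one.mpr (hp1 q))).toMeasure))
      ≤ Real.exp (-2 * α) * n * α := by
  change ∫ ω, _ ∂bernoulliPi p hp1 ≤ _
  have hrow := integral_exp_sum_symEntry_le (zero_le_one.trans hα) p hp0 hp1 hpα
  have hexp : Real.exp ((Real.exp 1 - 1) * α - 10 * α) ≤ Real.exp (-2 * α) * α := by
    have he : Real.exp 1 ≤ 9 := by linarith [Real.exp_one_lt_d9]
    exact (Real.exp_le_exp.mpr (by nlinarith)).trans
      (le_mul_of_one_le_right (Real.exp_pos _).le hα)
  calc ∫ ω, (∑ i, if 20 * α < ∑ j, symEntry ω i j then ∑ j, symEntry ω i j else 0)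
        ∂bernoulliPi p hp1
      ≤ ∫ ω, ∑ i, Real.exp (∑ j, symEntry ω i j) / Real.exp (10 * α) ∂bernoulliPi p hp1 := by
        refine integral_mono .of_finite .of_finite fun ω => Finset.sum_le_sum fun i _ => ?_
        refine (ite_lt_self_le_exp_sub (20 * α) _).trans_eq ?_
        rw [← Real.exp_sub]
        ring_nf
    _ ≤ ∑ _i : Fin n, Real.exp ((Real.exp 1 - 1) * α) / Real.exp (10 * α) := by
        rw [integral_finsetSum _ fun _ _ => .of_finite]
        exact Finset.sum_le_sum fun i _ =>
          (integral_div _ _).trans_le (div_le_div_of_nonneg_right (hrow i) (Real.exp_pos _).le)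
    _ = n * Real.exp ((Real.exp 1 - 1) * α - 10 * α) := by simp [Real.exp_sub]
    _ ≤ n * (Real.exp (-2 * α) * α) := by gcongr
    _ = Real.exp (-2 * α) * n * α := by ring

theorem heavy_rows_expected_ones (n : ℕ) (hn : 0 < n) (α : ℝ) (hα : 1 ≤ α)
    (p : {q : Fin n × Fin n // q.1 < q.2} → ℝ)
    (hp0 : ∀ q, 0 ≤ p q) (hp1 : ∀ q, p q ≤ 1) (hpα : ∀ q, p q ≤ α / n) :
    (∫ ω, (∑ i, if 20 * α < ∑ j, symEntry ω i j then ∑ j, symEntry ω i j else 0)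
        ∂ Measure.pi (fun q => (PMF.bernoulli (Real.toNNReal (p q))
            (Real.toNNReal_le_one.mpr (hp1 q))).toMeasure))
      ≤ Real.exp (-2 * α) * n * α :=
  heavy_rows_expected_ones_general n α hα p hp0 hp1 hpα
end

section
/- Let Z₀ ∈ {0,1}^{n×k} be a matrix whose rows each sum to 1 and whose columns each sum to n/k (k divides n), and similarly for Z. Define S(Z) := (k/n)·Zᵀ Z₀ ∈ ℝ^{k×k}. Then S(Z) is doubly stochastic, and for all k×k matrices B, B₀: (1/n²)·‖Z B Zᵀ − Z₀ B₀ Z₀ᵀ‖_F² = (1/k²)·∑_{a,a',b,b' ∈ [k]} (B(a,b) − B₀(a',b'))²·S(Z)(a,a')·S(Z)(b,b'). -/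
open Matrix

lemma exists_indicator {n k : ℕ} (Z : Matrix (Fin n) (Fin k) ℝ)
    (h01 : ∀ i a, Z i a = 0 ∨ Z i a = 1) (hrow : ∀ i, ∑ a, Z i a = 1) :
    ∃ f : Fin n → Fin k, ∀ i b, Z i b = if b = f i then 1 else 0 := by
  have h : ∀ i, ∃ a : Fin k, ∀ b, Z i b = if b = a then 1 else 0 := by
    intro i
    have hex : ∃ a, Z i a = 1 := by
      by_contra h
      push_neg at h
      have hz : ∀ a, Z i a = 0 := fun a => (h01 i a).resolve_right (h a)
      have := hrow i
      simp [hz] at this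
    obtain ⟨a, ha⟩ := hex
    refine ⟨a, fun b => ?_⟩
    by_cases hb : b = a
    · simp [hb, ha]
    · simp only [hb, if_false]
      have hsum := hrow i
      rw [← Finset.add_sum_erase _ _ (Finset.mem_univ a)] at hsum
      have hs0 : ∑ c ∈ Finset.univ.erase a, Z i c = 0 := by
        rw [ha] at hsum; linarith
      have hnn : ∀ c ∈ Finset.univ.erase a, 0 ≤ Z i c := fun c _ => by
        rcases h01 i c with h | h <;> simp [h]
      exact (Finset.sum_eq_zero_iff_of_nonneg hnn).mp hs0 b (by simp [hb])
  choose f hf using h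
  exact ⟨f, hf⟩

lemma collapse {n k : ℕ} (f g : Fin n → Fin k) (u : Fin k → Fin k → ℝ) :
    ∑ b, ∑ b', u b b' * (∑ j, if b = f j ∧ b' = g j then (1:ℝ) else 0)
      = ∑ j, u (f j) (g j) := by
  simp only [Finset.mul_sum]
  conv_lhs => rw [Finset.sum_comm]
  conv_lhs => enter [2, j]; rw [Finset.sum_comm]
  rw [Finset.sum_comm]
  simp [ite_and, mul_ite, Finset.sum_ite_eq]

theorem membership_to_doubly_stochastic (n k : ℕ) (hk : 0 < k) (hn : 0 < n)
    (Z Z₀ : Matrix (Fin n) (Fin k) ℝ)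
    (hZ01 : ∀ i a, Z i a = 0 ∨ Z i a = 1) (hZrow : ∀ i, ∑ a, Z i a = 1)
    (hZcol : ∀ a, ∑ i, Z i a = (n : ℝ) / k)
    (hZ₀01 : ∀ i a, Z₀ i a = 0 ∨ Z₀ i a = 1) (hZ₀row : ∀ i, ∑ a, Z₀ i a = 1)
    (hZ₀col : ∀ a, ∑ i, Z₀ i a = (n : ℝ) / k)
    (B B₀ : Matrix (Fin k) (Fin k) ℝ) :
    (∀ a b, 0 ≤ (((k : ℝ) / n) • (Zᵀ * Z₀)) a b) ∧
      (∀ a, ∑ b, (((k : ℝ) / n) • (Zᵀ * Z₀)) a b = 1) ∧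
      (∀ b, ∑ a, (((k : ℝ) / n) • (Zᵀ * Z₀)) a b = 1) ∧
      (1 / (n : ℝ) ^ 2) * frobSq (Z * B * Zᵀ - Z₀ * B₀ * Z₀ᵀ)
        = (1 / (k : ℝ) ^ 2) * ∑ a, ∑ a', ∑ b, ∑ b',
            (B a b - B₀ a' b') ^ 2 * (((k : ℝ) / n) • (Zᵀ * Z₀)) a a'
              * (((k : ℝ) / n) • (Zᵀ * Z₀)) b b' := by
  have hk0 : (k : ℝ) ≠ 0 := Nat.cast_ne_zero.mpr hk.ne'
  have hn0 : (n : ℝ) ≠ 0 := Nat.cast_ne_zero.mpr hn.ne'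
  obtain ⟨f, hf⟩ := exists_indicator Z hZ01 hZrow
  obtain ⟨g, hg⟩ := exists_indicator Z₀ hZ₀01 hZ₀row
  have hZnn : ∀ i a, 0 ≤ Z i a := fun i a => by
    rcases hZ01 i a with h | h <;> simp [h]
  have hZ₀nn : ∀ i a, 0 ≤ Z₀ i a := fun i a => by
    rcases hZ₀01 i a with h | h <;> simp [h]
  have hS : ∀ a a', (((k : ℝ) / n) • (Zᵀ * Z₀)) a a'
      = ((k : ℝ) / n) * ∑ i, (if a = f i ∧ a' = g i then (1:ℝ) else 0) := by
    intro a a'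
    simp only [Matrix.smul_apply, Matrix.mul_apply, Matrix.transpose_apply,
      smul_eq_mul, hf, hg]
    congr 1
    refine Finset.sum_congr rfl fun i _ => ?_
    by_cases h1 : a = f i <;> by_cases h2 : a' = g i <;> simp [h1, h2]
  refine ⟨?_, ?_, ?_, ?_⟩
  · intro a b
    rw [hS]
    have : (0:ℝ) ≤ ∑ i, (if a = f i ∧ b = g i then (1:ℝ) else 0) :=
      Finset.sum_nonneg fun i _ => by positivity
    positivity
  · intro a
    have : ∑ b, (((k : ℝ) / n) • (Zᵀ * Z₀)) a b
        = ((k : ℝ) / n) * ∑ i, Z i a * ∑ b, Z₀ i b := by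
      simp only [Matrix.smul_apply, Matrix.mul_apply, Matrix.transpose_apply,
        smul_eq_mul, Finset.mul_sum]
      rw [Finset.sum_comm]
    rw [this]
    simp only [hZ₀row, mul_one, hZcol]
    field_simp
  · intro b
    have : ∑ a, (((k : ℝ) / n) • (Zᵀ * Z₀)) a b
        = ((k : ℝ) / n) * ∑ i, (∑ a, Z i a) * Z₀ i b := by
      simp only [Matrix.smul_apply, Matrix.mul_apply, Matrix.transpose_apply,
        smul_eq_mul, Finset.mul_sum, Finset.sum_mul]
      rw [Finset.sum_comm]
    rw [this]
    simp only [hZrow, one_mul, hZ₀col]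
    field_simp
  · -- main identity
    have hP : ∀ i j, (Z * B * Zᵀ) i j = B (f i) (f j) := by
      intro i j
      simp [Matrix.mul_apply, Matrix.transpose_apply, hf, ite_mul, mul_ite,
        Finset.sum_ite_eq]
    have hP₀ : ∀ i j, (Z₀ * B₀ * Z₀ᵀ) i j = B₀ (g i) (g j) := by
      intro i j
      simp [Matrix.mul_apply, Matrix.transpose_apply, hg, ite_mul, mul_ite,
        Finset.sum_ite_eq]
    have hfrob : frobSq (Z * B * Zᵀ - Z₀ * B₀ * Z₀ᵀ)
        = ∑ i, ∑ j, (B (f i) (f j) - B₀ (g i) (g j)) ^ 2 := by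
      unfold frobSq
      refine Finset.sum_congr rfl fun i _ => Finset.sum_congr rfl fun j _ => ?_
      simp [hP, hP₀]
    set C : Fin k → Fin k → ℝ :=
      fun a a' => ∑ i, (if a = f i ∧ a' = g i then (1:ℝ) else 0) with hC
    have key : ∑ a, ∑ a', ∑ b, ∑ b',
        (B a b - B₀ a' b') ^ 2 * C a a' * C b b'
        = ∑ i, ∑ j, (B (f i) (f j) - B₀ (g i) (g j)) ^ 2 := by
      have step1 : ∀ a a', ∑ b, ∑ b', ((B a b - B₀ a' b') ^ 2 * C a a') * C b b'
          = ∑ j, (B a (f j) - B₀ a' (g j)) ^ 2 * C a a' :=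
        fun a a' => collapse f g (fun b b' => (B a b - B₀ a' b') ^ 2 * C a a')
      calc ∑ a, ∑ a', ∑ b, ∑ b', (B a b - B₀ a' b') ^ 2 * C a a' * C b b'
          = ∑ a, ∑ a', ∑ j, (B a (f j) - B₀ a' (g j)) ^ 2 * C a a' := by
            refine Finset.sum_congr rfl fun a _ => Finset.sum_congr rfl fun a' _ => ?_
            exact step1 a a'
        _ = ∑ j, ∑ a, ∑ a', (B a (f j) - B₀ a' (g j)) ^ 2 * C a a' := by
            conv_lhs => rw [Finset.sum_comm]
            conv_lhs => enter [2, x]; rw [Finset.sum_comm]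
            rw [Finset.sum_comm]
            exact Finset.sum_congr rfl fun j _ => Finset.sum_comm
        _ = ∑ j, ∑ i, (B (f i) (f j) - B₀ (g i) (g j)) ^ 2 := by
            refine Finset.sum_congr rfl fun j _ => ?_
            exact collapse f g (fun a a' => (B a (f j) - B₀ a' (g j)) ^ 2)
        _ = ∑ i, ∑ j, (B (f i) (f j) - B₀ (g i) (g j)) ^ 2 := Finset.sum_comm
    have hSrw : ∑ a, ∑ a', ∑ b, ∑ b',
        (B a b - B₀ a' b') ^ 2 * (((k : ℝ) / n) • (Zᵀ * Z₀)) a a'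
          * (((k : ℝ) / n) • (Zᵀ * Z₀)) b b'
        = ((k : ℝ) / n) ^ 2 * ∑ a, ∑ a', ∑ b, ∑ b',
            (B a b - B₀ a' b') ^ 2 * C a a' * C b b' := by
      simp only [Finset.mul_sum]
      refine Finset.sum_congr rfl fun a _ => Finset.sum_congr rfl fun a' _ =>
        Finset.sum_congr rfl fun b _ => Finset.sum_congr rfl fun b' _ => ?_
      rw [hS, hS]
      ring
    rw [hfrob, hSrw, key]
    have : (1 / (k : ℝ) ^ 2) * (((k : ℝ) / n) ^ 2
        * ∑ i, ∑ j, (B (f i) (f j) - B₀ (g i) (g j)) ^ 2)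
        = (1 / (n : ℝ) ^ 2) * ∑ i, ∑ j, (B (f i) (f j) - B₀ (g i) (g j)) ^ 2 := by
      field_simp
    rw [this]
end
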